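/- Let f be a function on ℝ^{Nn} which is asymptotically W^{1,φ}-quasiconvex (i.e. f agrees outside a ball with a uniformly strictly W^{1,φ}-quasiconvex function g) and locally bounded from below. Then there exist a constant M > 0 and a uniformly strictly W^{1,φ}-quasiconvex function G such that f(z) = G(z) for |z| > M and G(z) ≤ f(z) for all z ∈ ℝ^{Nn}. -/

import Mathlib

/-!
Let `g` be the uniformly strictly quasiconvex function with `f = g` outside `B_M`, and let
`c ≥ 0` bound `g - f` on `B_M` (`g` is continuous, `f` is locally bounded below). Put
`G = g - c λ`, where `λ = T((R² - |z|²)/(R² - M²))` with `T` a smooth transition from `0` to `1`: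
then `λ = 1` on `B_M` and `λ = 0` outside `B_R`, so `G ≤ f` everywhere and `G = f` outside `B_R`.

Testing `G` at `z + Dξ`, the linear term `⟨∇λ(z), Dξ⟩` of `λ(z + Dξ) - λ(z)` has average zero,
and the remainder is `O(c |Dξ|²/R²)` and also `O(c (1 + |Dξ|)/R)`; it vanishes unless
`|z| ≤ R + |Dξ|`. Since `φ_a(t) ≥ φ'(1) t² / (2 (a + t))` for `a ≥ 1`, the shifted N-function at
`a = 1 + |z|` is quadratic for `|Dξ| ≤ R` and linear beyond, so for `R` large the remainder is
at most `k/2 · φ_{1+|z|}(|Dξ|)`, and `G` is uniformly strictly quasiconvex with constant `k/2`.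
-/

open MeasureTheory Real Filter

def IsNFunction (φ φ' : ℝ → ℝ) : Prop :=
  ConvexOn ℝ (Set.Ici 0) φ ∧
  φ 0 = 0 ∧ φ' 0 = 0 ∧
  (∀ t : ℝ, 0 ≤ t → φ t = ∫ s in (0:ℝ)..t, φ' s) ∧
  (∀ t : ℝ, 0 ≤ t → ContinuousWithinAt φ' (Set.Ici t) t) ∧
  MonotoneOn φ' (Set.Ici 0) ∧
  (∀ t : ℝ, 0 < t → 0 < φ' t) ∧
  Tendsto φ' atTop atTop


/-- The Assumption: `φ` is an N-function of class `C¹([0,∞)) ∩ C²((0,∞))`,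
with derivative `φ'` and second derivative `φ''`. -/
def SatisfiesAssumption (φ φ' φ'' : ℝ → ℝ) : Prop :=
  IsNFunction φ φ' ∧
  (∀ t : ℝ, 0 ≤ t → HasDerivWithinAt φ (φ' t) (Set.Ici 0) t) ∧
  ContinuousOn φ' (Set.Ici 0) ∧
  (∀ t : ℝ, 0 < t → HasDerivAt φ' (φ'' t) t) ∧
  ContinuousOn φ'' (Set.Ioi 0)

/-- The shifted N-function `φ_a(t) = ∫₀ᵗ φ'(a+s)·s/(a+s) ds`. -/
noncomputable def shiftedPhi (φ' : ℝ → ℝ) (a t : ℝ) : ℝ :=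
  ∫ s in (0:ℝ)..t, φ' (a + s) * s / (a + s)

/-- The gradient of a map `ξ : ℝⁿ → ℝ^N` at `x`, viewed as an element of `ℝ^{N×n}`
with the Euclidean (Frobenius) norm. -/
noncomputable def gradMat {n N : ℕ} (ξ : EuclideanSpace ℝ (Fin n) → EuclideanSpace ℝ (Fin N))
    (x : EuclideanSpace ℝ (Fin n)) : EuclideanSpace ℝ (Fin N × Fin n) :=
  WithLp.toLp 2 (fun p : Fin N × Fin n => fderiv ℝ ξ x (EuclideanSpace.single p.2 1) p.1)

/-- `g` is uniformly strictly `W^{1,φ}`-quasiconvex with constant `k`: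
`⨍_{B₁} g(z + Dξ) ≥ g(z) + k·⨍_{B₁} φ_{1+|z|}(|Dξ|)` for all `z` and all
`ξ ∈ C¹_c(B₁, ℝ^N)`. -/
def UnifStrictQC {n N : ℕ} (φ' : ℝ → ℝ) (k : ℝ)
    (g : EuclideanSpace ℝ (Fin N × Fin n) → ℝ) : Prop :=
  ∀ (z : EuclideanSpace ℝ (Fin N × Fin n))
    (ξ : EuclideanSpace ℝ (Fin n) → EuclideanSpace ℝ (Fin N)),
    ContDiff ℝ 1 ξ → HasCompactSupport ξ →
    tsupport ξ ⊆ Metric.ball (0 : EuclideanSpace ℝ (Fin n)) 1 →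
    g z + k * ⨍ x in Metric.ball (0 : EuclideanSpace ℝ (Fin n)) 1,
        shiftedPhi φ' (1 + ‖z‖) ‖gradMat ξ x‖ ≤
      ⨍ x in Metric.ball (0 : EuclideanSpace ℝ (Fin n)) 1, g (z + gradMat ξ x)

/-- `f` is asymptotically `W^{1,φ}`-quasiconvex: `f` agrees outside a ball with a
continuous uniformly strictly `W^{1,φ}`-quasiconvex function. -/
def AsympQC {n N : ℕ} (φ' : ℝ → ℝ) (f : EuclideanSpace ℝ (Fin N × Fin n) → ℝ) : Prop :=
  ∃ (M : ℝ) (g : EuclideanSpace ℝ (Fin N × Fin n) → ℝ) (k : ℝ),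
    0 < M ∧ Continuous g ∧ 0 < k ∧ UnifStrictQC φ' k g ∧ ∀ z, M < ‖z‖ → f z = g z

open scoped Topology InnerProductSpace

section ShiftedPhi

variable {φ' : ℝ → ℝ} {a : ℝ}

lemma continuousOn_shiftedPhi_integrand (hcont : ContinuousOn φ' (Set.Ici 0)) (ha : 0 < a) :
    ContinuousOn (fun s => φ' (a + s) * s / (a + s)) (Set.Ici 0) := by
  refine ContinuousOn.div ?_ (by fun_prop) fun s (hs : 0 ≤ s) => by positivity
  refine (hcont.comp (by fun_prop) fun s (hs : 0 ≤ s) => ?_).mul continuousOn_id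
  show 0 ≤ a + s
  positivity

lemma intervalIntegrable_shiftedPhi_integrand (hcont : ContinuousOn φ' (Set.Ici 0)) (ha : 0 < a)
    {t : ℝ} (ht : 0 ≤ t) :
    IntervalIntegrable (fun s => φ' (a + s) * s / (a + s)) volume 0 t :=
  ((continuousOn_shiftedPhi_integrand hcont ha).mono
    (by simpa [Set.uIcc_of_le ht] using Set.Icc_subset_Ici_self)).intervalIntegrable

lemma continuousOn_shiftedPhi (hcont : ContinuousOn φ' (Set.Ici 0)) (ha : 0 < a) :
    ContinuousOn (shiftedPhi φ' a) (Set.Ici 0) := by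
  intro t (ht : 0 ≤ t)
  have hIcc : ContinuousOn (shiftedPhi φ' a) (Set.Icc 0 (t + 1)) := by
    have h := intervalIntegral.continuousOn_primitive_interval'
      (intervalIntegrable_shiftedPhi_integrand hcont ha (by linarith : (0:ℝ) ≤ t + 1))
      Set.left_mem_uIcc
    rwa [Set.uIcc_of_le (by linarith)] at h
  refine (hIcc t ⟨ht, by linarith⟩).mono_of_mem_nhdsWithin ?_
  rw [← Set.Ici_inter_Iic]
  exact inter_mem_nhdsWithin _ (Iic_mem_nhds (by linarith))

variable (hmono : MonotoneOn φ' (Set.Ici 0)) (h0 : 0 ≤ φ' 0)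
include hmono h0

lemma nonneg_of_monotoneOn {s : ℝ} (hs : 0 ≤ s) : 0 ≤ φ' s :=
  h0.trans (hmono Set.self_mem_Ici hs hs)

lemma shiftedPhi_nonneg (ha : 0 < a) {t : ℝ} (ht : 0 ≤ t) : 0 ≤ shiftedPhi φ' a t :=
  intervalIntegral.integral_nonneg ht fun s ⟨hs, _⟩ => by
    have := nonneg_of_monotoneOn hmono h0 (by linarith : 0 ≤ a + s)
    positivity

lemma mul_sq_div_le_shiftedPhi (hcont : ContinuousOn φ' (Set.Ici 0)) {r : ℝ} (hr : 0 ≤ r)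
    (hra : r ≤ a) (ha : 0 < a) {t : ℝ} (ht : 0 ≤ t) :
    φ' r * t ^ 2 / (2 * (a + t)) ≤ shiftedPhi φ' a t := by
  have hlin : ∫ s in (0:ℝ)..t, φ' r / (a + t) * s = φ' r * t ^ 2 / (2 * (a + t)) := by
    rw [intervalIntegral.integral_const_mul, integral_id]
    field_simp
    ring
  rw [← hlin]
  refine intervalIntegral.integral_mono_on ht (intervalIntegral.intervalIntegrable_id.const_mul _)
    (intervalIntegrable_shiftedPhi_integrand hcont ha ht) fun s ⟨hs0, hst⟩ => ?_
  have hφ : φ' r ≤ φ' (a + s) := hmono hr (by simp only [Set.mem_Ici]; linarith) (by linarith)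
  have hφr := nonneg_of_monotoneOn hmono h0 hr
  calc φ' r / (a + t) * s = φ' r * s / (a + t) := by ring
    _ ≤ φ' (a + s) * s / (a + s) :=
      div_le_div₀ (mul_nonneg (hφr.trans hφ) hs0) (by gcongr) (by linarith) (by linarith)

end ShiftedPhi

section SmoothTransition

lemma smoothTransition_eventuallyEq_zero {x : ℝ} (hx : x < 0) :
    smoothTransition =ᶠ[𝓝 x] fun _ => 0 :=
  eventually_of_mem (Iio_mem_nhds hx) fun _ hy => smoothTransition.zero_of_nonpos (le_of_lt hy)

lemma deriv_smoothTransition_of_neg {x : ℝ} (hx : x < 0) : deriv smoothTransition x = 0 := by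
  rw [(smoothTransition_eventuallyEq_zero hx).deriv_eq, deriv_const]

lemma deriv_deriv_smoothTransition_of_neg {x : ℝ} (hx : x < 0) :
    deriv (deriv smoothTransition) x = 0 := by
  rw [(smoothTransition_eventuallyEq_zero hx).deriv.deriv_eq]
  simp

lemma hasCompactSupport_deriv_smoothTransition : HasCompactSupport (deriv smoothTransition) := by
  refine HasCompactSupport.intro (isCompact_Icc (a := 0) (b := 1)) fun x hx => ?_
  rcases lt_or_ge x 0 with hx0 | hx0
  · exact deriv_smoothTransition_of_neg hx0
  · have h1 : smoothTransition =ᶠ[𝓝 x] fun _ => 1 :=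
      eventually_of_mem (Ioi_mem_nhds (not_le.1 fun h => hx ⟨hx0, h⟩)) fun _ hy =>
        smoothTransition.one_of_one_le (le_of_lt hy)
    rw [h1.deriv_eq, deriv_const]

lemma differentiable_smoothTransition : Differentiable ℝ smoothTransition :=
  smoothTransition.contDiff.differentiable (n := 1) one_ne_zero

lemma differentiable_deriv_smoothTransition : Differentiable ℝ (deriv smoothTransition) :=
  (smoothTransition.contDiff (n := 2)).differentiable_deriv_two

lemma exists_abs_deriv_smoothTransition_le : ∃ B, ∀ x, |deriv smoothTransition x| ≤ B :=
  hasCompactSupport_deriv_smoothTransition.exists_bound_of_continuous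
    (smoothTransition.contDiff (n := 1)).continuous_deriv_one

lemma exists_abs_deriv_deriv_smoothTransition_le :
    ∃ L, ∀ x, |deriv (deriv smoothTransition) x| ≤ L :=
  hasCompactSupport_deriv_smoothTransition.deriv.exists_bound_of_continuous
    ((smoothTransition.contDiff (n := 2)).deriv' (n := 1)).continuous_deriv_one

end SmoothTransition

lemma abs_sub_sub_le_of_abs_deriv_deriv_le {u u' u'' : ℝ → ℝ} {K : ℝ}
    (hu : ∀ s, HasDerivAt u (u' s) s) (hu' : ∀ s, HasDerivAt u' (u'' s) s)
    (hK : ∀ s ∈ Set.Icc (0:ℝ) 1, |u'' s| ≤ K) :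
    |u 1 - u 0 - u' 0| ≤ K := by
  have hK0 : 0 ≤ K := (abs_nonneg _).trans (hK 0 (by simp))
  have hu'_sub : ∀ s ∈ Set.Icc (0:ℝ) 1, ‖u' s - u' 0‖ ≤ K * (s - 0) :=
    norm_image_sub_le_of_norm_deriv_le_segment' (fun s _ => (hu' s).hasDerivWithinAt)
      fun s hs => hK s (Set.Ico_subset_Icc_self hs)
  have key := norm_image_sub_le_of_norm_deriv_le_segment_01' (C := K)
    (f := fun s => u s - s * u' 0) (f' := fun s => u' s - u' 0)
    (fun s _ => ((hu s).sub ((hasDerivAt_id' s).mul_const (u' 0))).hasDerivWithinAt.congr_deriv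
      (by ring))
    fun s hs => (hu'_sub s (Set.Ico_subset_Icc_self hs)).trans (by nlinarith [hs.1, hs.2])
  simpa [sub_right_comm] using key

section RadialCutoff

variable {E : Type*} [NormedAddCommGroup E] {R r : ℝ}

noncomputable def radialCutoff (R r : ℝ) (y : E) : ℝ :=
  smoothTransition ((R ^ 2 - ‖y‖ ^ 2) / (R ^ 2 - r ^ 2))

lemma continuous_radialCutoff (R r : ℝ) : Continuous (radialCutoff R r : E → ℝ) := by
  unfold radialCutoff
  fun_prop

lemma radialCutoff_nonneg (R r : ℝ) (y : E) : 0 ≤ radialCutoff R r y :=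
  smoothTransition.nonneg _

lemma radialCutoff_le_one (R r : ℝ) (y : E) : radialCutoff R r y ≤ 1 :=
  smoothTransition.le_one _

lemma radialCutoff_of_norm_le (hrR : r < R) (hr : 0 ≤ r) {y : E} (hy : ‖y‖ ≤ r) :
    radialCutoff R r y = 1 := by
  have hW : 0 < R ^ 2 - r ^ 2 := by nlinarith
  refine smoothTransition.one_of_one_le ?_
  rw [le_div_iff₀ hW]
  nlinarith [norm_nonneg y]

lemma radialCutoff_of_le_norm (hrR : r < R) (hr : 0 ≤ r) {y : E} (hy : R ≤ ‖y‖) :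
    radialCutoff R r y = 0 := by
  have hW : 0 < R ^ 2 - r ^ 2 := by nlinarith
  refine smoothTransition.zero_of_nonpos (div_nonpos_of_nonpos_of_nonneg ?_ hW.le)
  nlinarith

variable [InnerProductSpace ℝ E]

noncomputable def radialCutoffGrad (R r : ℝ) (z : E) : E :=
  (-2 * deriv smoothTransition ((R ^ 2 - ‖z‖ ^ 2) / (R ^ 2 - r ^ 2)) / (R ^ 2 - r ^ 2)) • z

lemma radialCutoffGrad_of_lt_norm (hrR : r < R) (hr : 0 ≤ r) {z : E} (hz : R < ‖z‖) :
    radialCutoffGrad R r z = 0 := by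
  have hW : 0 < R ^ 2 - r ^ 2 := by nlinarith
  rw [radialCutoffGrad, deriv_smoothTransition_of_neg (div_neg_of_neg_of_pos (by nlinarith) hW)]
  simp

variable {B : ℝ} (hB : ∀ x, |deriv smoothTransition x| ≤ B) (hr : 0 < r) (hrR : 2 * r ≤ R)
include hB hr hrR

lemma norm_radialCutoffGrad_le (z : E) : ‖radialCutoffGrad R r z‖ ≤ 4 * B / R := by
  have hW : R ^ 2 ≤ 2 * (R ^ 2 - r ^ 2) := by nlinarith
  have hB0 : 0 ≤ B := (abs_nonneg _).trans (hB 0)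
  rcases le_or_gt ‖z‖ R with hz | hz
  · have hR : 0 < R := by linarith
    rw [radialCutoffGrad, norm_smul, Real.norm_eq_abs, abs_div, abs_mul, abs_neg, abs_two,
      abs_of_pos (by nlinarith : 0 < R ^ 2 - r ^ 2)]
    calc 2 * |deriv smoothTransition ((R ^ 2 - ‖z‖ ^ 2) / (R ^ 2 - r ^ 2))|
          / (R ^ 2 - r ^ 2) * ‖z‖
        ≤ 2 * B / (R ^ 2 / 2) * R := by
          gcongr
          exacts [hB _, by linarith]
      _ = 4 * B / R := by field_simp; ring
  · rw [radialCutoffGrad_of_lt_norm (by linarith) hr.le hz, norm_zero]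
    have : 0 < R := by linarith
    positivity

end RadialCutoff

section RadialCutoffTaylor

variable {E : Type*} [NormedAddCommGroup E] [InnerProductSpace ℝ E] {R r : ℝ}

lemma hasDerivAt_norm_sq_line (z w : E) (s : ℝ) :
    HasDerivAt (fun s : ℝ => ‖z + s • w‖ ^ 2) (2 * ⟪z + s • w, w⟫_ℝ) s := by
  simpa using (((hasDerivAt_id' s).smul_const w).const_add z).norm_sq

lemma hasDerivAt_inner_line (z w : E) (s : ℝ) :
    HasDerivAt (fun s : ℝ => ⟪z + s • w, w⟫_ℝ) (‖w‖ ^ 2) s := by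
  simpa [real_inner_self_eq_norm_sq] using
    (((hasDerivAt_id' s).smul_const w).const_add z).inner ℝ (hasDerivAt_const s w)

variable {B L : ℝ} (hB : ∀ x, |deriv smoothTransition x| ≤ B)
  (hL : ∀ x, |deriv (deriv smoothTransition) x| ≤ L) (hr : 0 < r) (hrR : 2 * r ≤ R)
include hB hL hr hrR

lemma abs_deriv_deriv_radialCutoff_line_le (y w : E) :
    |deriv (deriv smoothTransition) ((R ^ 2 - ‖y‖ ^ 2) / (R ^ 2 - r ^ 2))
        * (-(2 * ⟪y, w⟫_ℝ) / (R ^ 2 - r ^ 2)) * (-(2 * ⟪y, w⟫_ℝ) / (R ^ 2 - r ^ 2))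
      + deriv smoothTransition ((R ^ 2 - ‖y‖ ^ 2) / (R ^ 2 - r ^ 2))
        * (-(2 * ‖w‖ ^ 2) / (R ^ 2 - r ^ 2))|
      ≤ (16 * L + 4 * B) / R ^ 2 * ‖w‖ ^ 2 := by
  set W := R ^ 2 - r ^ 2
  set p := (R ^ 2 - ‖y‖ ^ 2) / W
  set q := -(2 * ⟪y, w⟫_ℝ) / W
  have hW : 0 < W := by nlinarith
  have hR : 0 < R := by linarith
  have hB0 : 0 ≤ B := (abs_nonneg _).trans (hB 0)
  have hL0 : 0 ≤ L := (abs_nonneg _).trans (hL 0)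
  have hinvW : 1 / W ≤ 2 / R ^ 2 := by
    rw [div_le_div_iff₀ hW (by positivity)]
    nlinarith
  rcases lt_or_ge p 0 with hp | hp
  · rw [deriv_deriv_smoothTransition_of_neg hp, deriv_smoothTransition_of_neg hp]
    simp only [zero_mul, add_zero, abs_zero]
    positivity
  have hy : ‖y‖ ≤ R := by
    have : ‖y‖ ^ 2 ≤ R ^ 2 := by
      have := mul_nonneg hp hW.le
      rwa [div_mul_cancel₀ _ hW.ne', sub_nonneg] at this
    nlinarith [norm_nonneg y]
  have hq : |q| ≤ 4 * ‖w‖ / R := by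
    calc |q| = 2 * |⟪y, w⟫_ℝ| * (1 / W) := by
          simp only [q, abs_div, abs_neg, abs_mul, abs_two, abs_of_pos hW]; ring
      _ ≤ 2 * (R * ‖w‖) * (2 / R ^ 2) := by
          gcongr
          exact (abs_real_inner_le_norm _ _).trans (by gcongr)
      _ = 4 * ‖w‖ / R := by field_simp; ring
  have hw : |-(2 * ‖w‖ ^ 2) / W| ≤ 4 * ‖w‖ ^ 2 / R ^ 2 := by
    calc |-(2 * ‖w‖ ^ 2) / W| = 2 * ‖w‖ ^ 2 * (1 / W) := by
          rw [abs_div, abs_neg, abs_of_nonneg (by positivity), abs_of_pos hW]; ring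
      _ ≤ 2 * ‖w‖ ^ 2 * (2 / R ^ 2) := by gcongr
      _ = 4 * ‖w‖ ^ 2 / R ^ 2 := by ring
  calc _ ≤ L * (4 * ‖w‖ / R) * (4 * ‖w‖ / R) + B * (4 * ‖w‖ ^ 2 / R ^ 2) := by
        refine (abs_add_le _ _).trans ?_
        simp only [abs_mul]
        gcongr
        exacts [hL _, hB _]
    _ = (16 * L + 4 * B) / R ^ 2 * ‖w‖ ^ 2 := by field_simp; ring

lemma abs_radialCutoff_sub_sub_inner_le (z w : E) :
    |radialCutoff R r (z + w) - radialCutoff R r z - ⟪radialCutoffGrad R r z, w⟫_ℝ|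
      ≤ (16 * L + 4 * B) / R ^ 2 * ‖w‖ ^ 2 := by
  set W := R ^ 2 - r ^ 2
  set p : ℝ → ℝ := fun s => (R ^ 2 - ‖z + s • w‖ ^ 2) / W
  set q : ℝ → ℝ := fun s => -(2 * ⟪z + s • w, w⟫_ℝ) / W
  have hp : ∀ s, HasDerivAt p (q s) s := fun s =>
    ((hasDerivAt_norm_sq_line z w s).const_sub _).div_const W
  have hq : ∀ s, HasDerivAt q (-(2 * ‖w‖ ^ 2) / W) s := fun s =>
    (((hasDerivAt_inner_line z w s).const_mul 2).neg).div_const W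
  have hTp : ∀ s, HasDerivAt (fun s => smoothTransition (p s))
      (deriv smoothTransition (p s) * q s) s := fun s =>
    (differentiable_smoothTransition (p s)).hasDerivAt.comp s (hp s)
  have hT'p : ∀ s, HasDerivAt (fun s => deriv smoothTransition (p s) * q s)
      (deriv (deriv smoothTransition) (p s) * q s * q s
        + deriv smoothTransition (p s) * (-(2 * ‖w‖ ^ 2) / W)) s := fun s =>
    ((differentiable_deriv_smoothTransition (p s)).hasDerivAt.comp s (hp s)).mul (hq s)
  have hline : radialCutoff R r (z + w) - radialCutoff R r z - ⟪radialCutoffGrad R r z, w⟫_ℝ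
      = smoothTransition (p 1) - smoothTransition (p 0) - deriv smoothTransition (p 0) * q 0 := by
    simp only [p, q, radialCutoff, radialCutoffGrad, real_inner_smul_left, zero_smul, add_zero,
      one_smul, W]
    ring
  rw [hline]
  exact abs_sub_sub_le_of_abs_deriv_deriv_le hTp hT'p fun s _ =>
    abs_deriv_deriv_radialCutoff_line_le hB hL hr hrR (z + s • w) w

end RadialCutoffTaylor

section Remainder

variable {E : Type*} [NormedAddCommGroup E] [InnerProductSpace ℝ E] {φ' : ℝ → ℝ}

/-- `φ_{1+|z|}(t)` grows quadratically for `t ≤ R` and linearly beyond, matching the quadratic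
and the linear bound on the remainder. -/
lemma sub_sub_inner_le_mul_shiftedPhi (hcont : ContinuousOn φ' (Set.Ici 0))
    (hmono : MonotoneOn φ' (Set.Ici 0)) (h0 : 0 ≤ φ' 0) (hβ : 0 < φ' 1)
    {h : E → ℝ} {A : E → E} {R c C K k : ℝ} (hR : 1 ≤ R)
    (hh0 : ∀ y, 0 ≤ h y) (hhc : ∀ y, h y ≤ c) (hsupp : ∀ y, R < ‖y‖ → h y = 0)
    (hAsupp : ∀ z, R < ‖z‖ → A z = 0) (hA : ∀ z, ‖A z‖ ≤ C)
    (hK : ∀ z w, |h (z + w) - h z - ⟪A z, w⟫_ℝ| ≤ K * ‖w‖ ^ 2)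
    (hkK : 8 * K * R ≤ k * φ' 1) (hkC : 8 * (c / R + C) ≤ k * φ' 1) (z w : E) :
    h (z + w) - h z - ⟪A z, w⟫_ℝ ≤ k * shiftedPhi φ' (1 + ‖z‖) ‖w‖ := by
  set t := ‖w‖
  have ht0 : 0 ≤ t := norm_nonneg w
  have hz0 : 0 ≤ ‖z‖ := norm_nonneg z
  have hc : 0 ≤ c := (hh0 0).trans (hhc 0)
  have hC : 0 ≤ C := (norm_nonneg _).trans (hA 0)
  have hk : 0 ≤ k := by
    have : 0 ≤ k * φ' 1 := le_trans (by positivity) hkC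
    exact (mul_nonneg_iff_of_pos_right hβ).mp this
  have hS := mul_sq_div_le_shiftedPhi hmono h0 hcont zero_le_one
    (by linarith : (1:ℝ) ≤ 1 + ‖z‖) (by linarith) ht0
  rcases lt_or_ge (R + t) ‖z‖ with hfar | hnear
  · have hzw : R < ‖z + w‖ := by
      have := norm_sub_norm_le z (-w)
      rw [norm_neg, sub_neg_eq_add] at this
      linarith
    rw [hsupp _ hzw, hsupp z (by linarith), hAsupp z (by linarith), inner_zero_left, sub_self,
      sub_zero]
    exact mul_nonneg hk (shiftedPhi_nonneg hmono h0 (by linarith) ht0)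
  refine le_trans ?_ (mul_le_mul_of_nonneg_left hS hk)
  rcases le_or_gt t R with hsmall | hlarge
  · calc h (z + w) - h z - ⟪A z, w⟫_ℝ ≤ K * t ^ 2 := (le_abs_self _).trans (hK z w)
      _ ≤ k * (φ' 1 * t ^ 2 / (2 * (4 * R))) := by
          rw [← mul_div_assoc, ← mul_assoc, le_div_iff₀ (by linarith)]
          nlinarith [sq_nonneg t]
      _ ≤ k * (φ' 1 * t ^ 2 / (2 * (1 + ‖z‖ + t))) := by
          gcongr
          linarith
  · have hinner : -⟪A z, w⟫_ℝ ≤ C * t :=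
      (neg_le_abs _).trans ((abs_real_inner_le_norm _ _).trans (by gcongr; exact hA z))
    calc h (z + w) - h z - ⟪A z, w⟫_ℝ ≤ c + C * t := by linarith [hhc (z + w), hh0 z]
      _ ≤ (c / R + C) * t := by
          have : c ≤ c / R * t := by
            rw [div_mul_eq_mul_div, le_div_iff₀ (by linarith)]
            nlinarith
          linarith
      _ ≤ k * φ' 1 * t / 8 := by nlinarith
      _ ≤ k * (φ' 1 * t ^ 2 / (2 * (1 + ‖z‖ + t))) := by
          have ht : 0 < t := by linarith
          rw [show k * φ' 1 * t / 8 = k * (φ' 1 * t ^ 2 / (2 * (4 * t))) by field_simp; ring]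
          gcongr
          linarith

end Remainder

section Gradient

lemma integral_fderiv_apply_eq_zero {E F : Type*} [NormedAddCommGroup E] [NormedSpace ℝ E]
    [FiniteDimensional ℝ E] [MeasurableSpace E] [BorelSpace E] {μ : Measure E}
    [μ.IsAddHaarMeasure] [NormedAddCommGroup F] [NormedSpace ℝ F] {ξ : E → F}
    (hξ : ContDiff ℝ 1 ξ) (hcs : HasCompactSupport ξ) (v : E) :
    ∫ x, fderiv ℝ ξ x v ∂μ = 0 := by
  have h := integral_smul_fderiv_eq_neg_fderiv_smul_of_integrable (μ := μ)
    (f := fun _ : E => (1:ℝ)) (g := ξ) (v := v) ?_ ?_ ?_ (fun _ _ => differentiableAt_const _)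
    (fun x _ => hξ.differentiable one_ne_zero x)
  · simpa using h
  · simp
  · simpa using ((hξ.continuous_fderiv one_ne_zero).clm_apply
      continuous_const).integrable_of_hasCompactSupport (hcs.fderiv_apply (𝕜 := ℝ) v)
  · simpa using hξ.continuous.integrable_of_hasCompactSupport hcs

variable {n N : ℕ} {ξ : EuclideanSpace ℝ (Fin n) → EuclideanSpace ℝ (Fin N)}

lemma continuous_gradMat (hξ : ContDiff ℝ 1 ξ) : Continuous (gradMat ξ) := by
  have := hξ.continuous_fderiv one_ne_zero
  unfold gradMat
  fun_prop

lemma integral_inner_gradMat (hξ : ContDiff ℝ 1 ξ) (hcs : HasCompactSupport ξ)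
    (Z : EuclideanSpace ℝ (Fin N × Fin n)) :
    ∫ x, ⟪Z, gradMat ξ x⟫_ℝ = 0 := by
  have hint : ∀ v, Integrable fun x => fderiv ℝ ξ x v := fun v =>
    ((hξ.continuous_fderiv one_ne_zero).clm_apply
      continuous_const).integrable_of_hasCompactSupport (hcs.fderiv_apply (𝕜 := ℝ) v)
  calc ∫ x, ⟪Z, gradMat ξ x⟫_ℝ
      = ∫ x, ∑ p : Fin N × Fin n,
          Z p * EuclideanSpace.proj p.1 (fderiv ℝ ξ x (EuclideanSpace.single p.2 1)) := by
        simp [gradMat, PiLp.inner_apply, mul_comm]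
    _ = ∑ p : Fin N × Fin n,
          Z p * EuclideanSpace.proj p.1 (∫ x, fderiv ℝ ξ x (EuclideanSpace.single p.2 1)) := by
        rw [integral_finsetSum _ fun p _ =>
          ((EuclideanSpace.proj (𝕜 := ℝ) p.1).integrable_comp
            (hint (EuclideanSpace.single p.2 1))).const_mul (Z p)]
        refine Finset.sum_congr rfl fun p _ => ?_
        rw [integral_const_mul]
        exact congrArg _ ((EuclideanSpace.proj p.1).integral_comp_comm (hint _))
    _ = 0 := by simp [integral_fderiv_apply_eq_zero hξ hcs]

lemma setIntegral_ball_inner_gradMat (hξ : ContDiff ℝ 1 ξ) (hcs : HasCompactSupport ξ)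
    (hsupp : tsupport ξ ⊆ Metric.ball 0 1) (Z : EuclideanSpace ℝ (Fin N × Fin n)) :
    ∫ x in Metric.ball 0 1, ⟪Z, gradMat ξ x⟫_ℝ = 0 := by
  rw [setIntegral_eq_integral_of_forall_compl_eq_zero fun x hx => ?_]
  · exact integral_inner_gradMat hξ hcs Z
  · have hD : fderiv ℝ ξ x = 0 := fderiv_of_notMem_tsupport (𝕜 := ℝ) fun h => hx (hsupp h)
    have : gradMat ξ x = 0 := by ext p; simp [gradMat, hD]
    simp [this]

end Gradient

lemma Continuous.integrableOn_ball {X Y : Type*} [MetricSpace X] [ProperSpace X]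
    [MeasurableSpace X] [OpensMeasurableSpace X] {ν : Measure X} [IsFiniteMeasureOnCompacts ν]
    [NormedAddCommGroup Y] {u : X → Y} (hu : Continuous u) (x : X) (r : ℝ) :
    IntegrableOn u (Metric.ball x r) ν :=
  (hu.continuousOn.integrableOn_compact (isCompact_closedBall x r)).mono_set
    Metric.ball_subset_closedBall

section Average

variable {α : Type*} [MeasurableSpace α] {μ : Measure α} {s : Set α} {f g : α → ℝ}

lemma setAverage_add (hf : IntegrableOn f s μ) (hg : IntegrableOn g s μ) :
    ⨍ x in s, f x + g x ∂μ = ⨍ x in s, f x ∂μ + ⨍ x in s, g x ∂μ := by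
  simp only [setAverage_eq, integral_add hf hg, smul_add]

lemma setAverage_sub (hf : IntegrableOn f s μ) (hg : IntegrableOn g s μ) :
    ⨍ x in s, f x - g x ∂μ = ⨍ x in s, f x ∂μ - ⨍ x in s, g x ∂μ := by
  simp only [setAverage_eq, integral_sub hf hg, smul_sub]

lemma setAverage_const_mul (c : ℝ) : ⨍ x in s, c * f x ∂μ = c * ⨍ x in s, f x ∂μ := by
  simp only [setAverage_eq, integral_const_mul, smul_eq_mul]
  ring

lemma setAverage_mono (hf : IntegrableOn f s μ) (hg : IntegrableOn g s μ) (h : f ≤ g) :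
    ⨍ x in s, f x ∂μ ≤ ⨍ x in s, g x ∂μ := by
  simp only [setAverage_eq, smul_eq_mul]
  exact mul_le_mul_of_nonneg_left (setIntegral_mono hf hg h) (inv_nonneg.2 measureReal_nonneg)

end Average

/-- The linear part `⟪A z, Dξ⟫` averages to zero over `B₁` since `ξ` has compact support. -/
theorem UnifStrictQC.sub {n N : ℕ} {φ' : ℝ → ℝ} {k k' : ℝ}
    {g h : EuclideanSpace ℝ (Fin N × Fin n) → ℝ}
    {A : EuclideanSpace ℝ (Fin N × Fin n) → EuclideanSpace ℝ (Fin N × Fin n)}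
    (hg : UnifStrictQC φ' k g) (hgc : Continuous g) (hhc : Continuous h)
    (hcont : ContinuousOn φ' (Set.Ici 0))
    (hrem : ∀ z w, h (z + w) - h z - ⟪A z, w⟫_ℝ
      ≤ k' * shiftedPhi φ' (1 + ‖z‖) ‖w‖) :
    UnifStrictQC φ' (k - k') fun y => g y - h y := by
  intro z ξ hξ hcs hsupp
  have hD := continuous_gradMat hξ
  have hΦ : Continuous fun x => shiftedPhi φ' (1 + ‖z‖) ‖gradMat ξ x‖ :=
    (continuousOn_shiftedPhi hcont (by positivity)).comp_continuous (continuous_norm.comp hD)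
      fun x => norm_nonneg _
  have hball : volume (Metric.ball (0 : EuclideanSpace ℝ (Fin n)) 1) ≠ 0 :=
    (Metric.measure_ball_pos volume 0 one_pos).ne'
  have hinner : ⨍ x in Metric.ball 0 1, ⟪A z, gradMat ξ x⟫_ℝ = 0 := by
    rw [setAverage_eq, setIntegral_ball_inner_gradMat hξ hcs hsupp, smul_zero]
  have hint : ∀ {F : EuclideanSpace ℝ (Fin n) → ℝ}, Continuous F →
      IntegrableOn F (Metric.ball 0 1) := fun hF => hF.integrableOn_ball 0 1
  have hh_avg : ⨍ x in Metric.ball 0 1, h (z + gradMat ξ x)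
      ≤ h z + k' * ⨍ x in Metric.ball 0 1, shiftedPhi φ' (1 + ‖z‖) ‖gradMat ξ x‖ :=
    calc ⨍ x in Metric.ball 0 1, h (z + gradMat ξ x)
        ≤ ⨍ x in Metric.ball 0 1, (h z + ⟪A z, gradMat ξ x⟫_ℝ
            + k' * shiftedPhi φ' (1 + ‖z‖) ‖gradMat ξ x‖) :=
          setAverage_mono (hint (by fun_prop)) (hint (by fun_prop))
            fun x => by linarith [hrem z (gradMat ξ x)]
      _ = _ := by
          rw [setAverage_add (hint (by fun_prop)) (hint (by fun_prop)),
            setAverage_add (hint continuous_const) (hint (by fun_prop)),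
            setAverage_const hball measure_ball_lt_top.ne, setAverage_const_mul, hinner, add_zero]
  show g z - h z + (k - k') * _
    ≤ ⨍ x in Metric.ball 0 1, (g (z + gradMat ξ x) - h (z + gradMat ξ x))
  rw [setAverage_sub (hint (by fun_prop)) (hint (by fun_prop))]
  linarith [hg z ξ hξ hcs hsupp]

lemma exists_sub_le_on_closedBall {X : Type*} [PseudoMetricSpace X] [ProperSpace X]
    {f g : X → ℝ} {x : X} {M : ℝ} (hg : Continuous g)
    (hf : BddBelow (f '' Metric.closedBall x M)) :
    ∃ c, 0 ≤ c ∧ ∀ y ∈ Metric.closedBall x M, g y - f y ≤ c := by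
  obtain ⟨C₁, hC₁⟩ := (isCompact_closedBall x M).bddAbove_image hg.continuousOn
  obtain ⟨C₂, hC₂⟩ := hf
  exact ⟨max 0 (C₁ - C₂), le_max_left _ _, fun y hy => by
    linarith [hC₁ ⟨y, hy, rfl⟩, hC₂ ⟨y, hy, rfl⟩, le_max_right 0 (C₁ - C₂)]⟩

theorem UnifStrictQC.exists_sub_mul_radialCutoff {n N : ℕ} {φ' : ℝ → ℝ}
    (hcont : ContinuousOn φ' (Set.Ici 0)) (hmono : MonotoneOn φ' (Set.Ici 0)) (h0 : 0 ≤ φ' 0)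
    (hβ : 0 < φ' 1) {g : EuclideanSpace ℝ (Fin N × Fin n) → ℝ} {k c r : ℝ}
    (hg : UnifStrictQC φ' k g) (hgc : Continuous g) (hk : 0 < k) (hc : 0 ≤ c) (hr : 0 < r) :
    ∃ R, 2 * r ≤ R ∧ UnifStrictQC φ' (k / 2) fun y => g y - c * radialCutoff R r y := by
  obtain ⟨B, hB⟩ := exists_abs_deriv_smoothTransition_le
  obtain ⟨L, hL⟩ := exists_abs_deriv_deriv_smoothTransition_le
  have hB0 : 0 ≤ B := (abs_nonneg _).trans (hB 0)
  have hL0 : 0 ≤ L := (abs_nonneg _).trans (hL 0)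
  set R := max (max 1 (2 * r)) (16 * c * (16 * L + 4 * B + 1) / (k * φ' 1))
  have hR1 : 1 ≤ R := (le_max_left _ _).trans (le_max_left _ _)
  have hrR : 2 * r ≤ R := (le_max_right _ _).trans (le_max_left _ _)
  have hRk : 16 * c * (16 * L + 4 * B + 1) ≤ R * (k * φ' 1) :=
    (div_le_iff₀ (by positivity)).mp (le_max_right _ _)
  refine ⟨R, hrR, ?_⟩
  rw [← sub_half]
  refine hg.sub hgc (continuous_const.mul (continuous_radialCutoff R r)) hcont
    (A := fun z => c • radialCutoffGrad R r z) fun z w => ?_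
  refine sub_sub_inner_le_mul_shiftedPhi hcont hmono h0 hβ hR1
    (A := fun z => c • radialCutoffGrad R r z) (C := c * (4 * B / R))
    (K := c * ((16 * L + 4 * B) / R ^ 2))
    (fun y => mul_nonneg hc (radialCutoff_nonneg R r y))
    (fun y => mul_le_of_le_one_right hc (radialCutoff_le_one R r y))
    (fun y hy => by rw [radialCutoff_of_le_norm (by linarith) hr.le hy.le, mul_zero])
    (fun y hy => by rw [radialCutoffGrad_of_lt_norm (by linarith) hr.le hy, smul_zero])
    (fun y => ?_) (fun y v => ?_) ?_ ?_ z w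
  · rw [norm_smul, Real.norm_eq_abs, abs_of_nonneg hc]
    exact mul_le_mul_of_nonneg_left (norm_radialCutoffGrad_le hB hr hrR y) hc
  · rw [inner_smul_left, RCLike.conj_to_real, ← mul_sub, ← mul_sub, abs_mul, abs_of_nonneg hc,
      mul_assoc]
    exact mul_le_mul_of_nonneg_left (abs_radialCutoff_sub_sub_inner_le hB hL hr hrR y v) hc
  · rw [show 8 * (c * ((16 * L + 4 * B) / R ^ 2)) * R = 8 * c * (16 * L + 4 * B) / R by
      field_simp, div_le_iff₀ (by linarith)]
    nlinarith
  · rw [show 8 * (c / R + c * (4 * B / R)) = 8 * c * (1 + 4 * B) / R by field_simp,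
      div_le_iff₀ (by linarith)]
    nlinarith [mul_nonneg hc hL0]

theorem asympQC_below_general (φ φ' φ'' : ℝ → ℝ) (hA : SatisfiesAssumption φ φ' φ'')
    (n N : ℕ) (f : EuclideanSpace ℝ (Fin N × Fin n) → ℝ)
    (hf : AsympQC (n := n) (N := N) φ' f)
    (hbb : ∀ R : ℝ, 0 < R → BddBelow (f '' Metric.ball 0 R)) :
    ∃ (M : ℝ) (G : EuclideanSpace ℝ (Fin N × Fin n) → ℝ) (k : ℝ),
      0 < M ∧ Continuous G ∧ 0 < k ∧ UnifStrictQC φ' k G ∧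
      (∀ z, M < ‖z‖ → f z = G z) ∧ ∀ z, G z ≤ f z := by
  obtain ⟨M, g, k, hM, hgc, hk, hg, hfg⟩ := hf
  obtain ⟨⟨-, -, h0, -, -, hmono, hpos, -⟩, -, hcont, -, -⟩ := hA
  obtain ⟨c, hc, hgf⟩ := exists_sub_le_on_closedBall (x := 0) (M := M) hgc
    ((hbb (M + 1) (by linarith)).mono
      (Set.image_mono (Metric.closedBall_subset_ball (by linarith))))
  obtain ⟨R, hMR, hG⟩ :=
    hg.exists_sub_mul_radialCutoff hcont hmono h0.ge (hpos 1 one_pos) hgc hk hc hM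
  refine ⟨R, fun y => g y - c * radialCutoff R M y, k / 2, by linarith,
    hgc.sub (continuous_const.mul (continuous_radialCutoff R M)), half_pos hk, hG,
    fun z hz => ?_, fun z => ?_⟩ <;> dsimp only
  · rw [hfg z (by linarith), radialCutoff_of_le_norm (by linarith) hM.le hz.le, mul_zero,
      sub_zero]
  · rcases le_or_gt ‖z‖ M with hz | hz
    · rw [radialCutoff_of_norm_le (by linarith) hM.le hz, mul_one]
      linarith [hgf z (mem_closedBall_zero_iff.mpr hz)]
    · rw [hfg z hz]
      linarith [mul_nonneg hc (radialCutoff_nonneg R M z)]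

/-- If `f` is asymptotically `W^{1,φ}`-quasiconvex and locally bounded from below, then
there are `M > 0` and a uniformly strictly `W^{1,φ}`-quasiconvex `G` with `f = G` outside
the ball of radius `M` and `G ≤ f` everywhere. -/
theorem asympQC_below (φ φ' φ'' : ℝ → ℝ) (hA : SatisfiesAssumption φ φ' φ'')
    (d d' : ℝ) (hd : 0 < d) (hd' : 0 < d')
    (hequiv : ∀ t : ℝ, 0 < t → d * (t * φ'' t) ≤ φ' t ∧ φ' t ≤ d' * (t * φ'' t))
    (n N : ℕ) (f : EuclideanSpace ℝ (Fin N × Fin n) → ℝ)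
    (hf : AsympQC (n := n) (N := N) φ' f)
    (hbb : ∀ R : ℝ, 0 < R → BddBelow (f '' Metric.ball 0 R)) :
    ∃ (M : ℝ) (G : EuclideanSpace ℝ (Fin N × Fin n) → ℝ) (k : ℝ),
      0 < M ∧ Continuous G ∧ 0 < k ∧ UnifStrictQC φ' k G ∧
      (∀ z, M < ‖z‖ → f z = G z) ∧ ∀ z, G z ≤ f z :=
  asympQC_below_general φ φ' φ'' hA n N f hf hbb
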